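/- arXiv:2505.09120 — 2 statements merged into one kernel-verified Lean document; each statement's English description precedes it below -/
import Mathlib

section
/- Let S be a triangulated category with a bounded-above t-structure, equipped with the metric M_i = S^{≥ i}. A sequence E_1 → E_2 → E_3 → ⋯ in S is Cauchy with respect to this metric if and only if for every integer n the sequence of truncations E_*^{≤ n} eventually stabilizes. -/
open CategoryTheory CategoryTheory.Limits CategoryTheory.Pretriangulated ZeroObject

universe v u v₂ u₂

namespace Paper

variable (T : Type u) [Category.{v} T] [HasZeroObject T] [HasShift T ℤ]
  [Preadditive T] [∀ n : ℤ, (shiftFunctor T n).Additive] [Pretriangulated T]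

/-- A t-structure on the triangulated category `T`, packaged together with a choice of
truncation functors and of the natural maps between them. -/
structure TData : Type (max u v) where
  le : ℤ → Set T
  ge : ℤ → Set T
  le_iso : ∀ n ⦃X Y : T⦄, (X ≅ Y) → X ∈ le n → Y ∈ le n
  ge_iso : ∀ n ⦃X Y : T⦄, (X ≅ Y) → X ∈ ge n → Y ∈ ge n
  le_mono : ∀ ⦃n m : ℤ⦄, n ≤ m → le n ⊆ le m
  ge_anti : ∀ ⦃n m : ℤ⦄, n ≤ m → ge m ⊆ ge n
  le_shift : ∀ (n : ℤ) ⦃X : T⦄, X ∈ le n → X⟦(1 : ℤ)⟧ ∈ le (n - 1)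
  ge_shift : ∀ (n : ℤ) ⦃X : T⦄, X ∈ ge n → X⟦(1 : ℤ)⟧ ∈ ge (n - 1)
  hom_zero : ∀ ⦃n m : ℤ⦄, n < m → ∀ ⦃X Y : T⦄, X ∈ le n → Y ∈ ge m →
    ∀ f : X ⟶ Y, f = 0
  truncLE : ℤ → T ⥤ T
  truncGE : ℤ → T ⥤ T
  truncLEπ : ∀ n, truncLE n ⟶ 𝟭 T
  truncGEι : ∀ n, 𝟭 T ⟶ truncGE n
  truncLE_mem : ∀ n X, (truncLE n).obj X ∈ le n
  truncGE_mem : ∀ n X, (truncGE n).obj X ∈ ge n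
  trunc_triangle : ∀ (n : ℤ) (X : T), ∃ h,
    Triangle.mk ((truncLEπ n).app X) ((truncGEι (n + 1)).app X) h ∈ distTriang T
  truncLEle : ∀ ⦃n m : ℤ⦄, n ≤ m → (truncLE n ⟶ truncLE m)
  truncLEle_refl : ∀ n : ℤ, truncLEle (le_refl n) = 𝟙 (truncLE n)
  truncLEle_trans : ∀ ⦃n m k : ℤ⦄ (h₁ : n ≤ m) (h₂ : m ≤ k),
    truncLEle h₁ ≫ truncLEle h₂ = truncLEle (h₁.trans h₂)
  truncLEle_π : ∀ ⦃n m : ℤ⦄ (h : n ≤ m), truncLEle h ≫ truncLEπ m = truncLEπ n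


/-- The cone of `f` lies in `P`: every completion of `f` to a distinguished triangle
has its third object in `P`. -/
def coneIn (P : Set T) {X Y : T} (f : X ⟶ Y) : Prop :=
  ∀ (Z : T) (g : Y ⟶ Z) (h : Z ⟶ X⟦(1 : ℤ)⟧),
    Triangle.mk f g h ∈ (distTriang T) → Z ∈ P

/-!
For `B ∈ S^{≤ m}` the truncation `X^{≤ m} → X` induces bijections on `Hom(B, -)`, so by a
restricted Yoneda argument `f^{≤ m}` is an isomorphism exactly when `f` induces bijections
`Hom(B, X) → Hom(B, Y)` for all `B ∈ S^{≤ m}`. The long exact `Hom(B, -)`-sequence of a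
triangle shows that this holds when the cone of `f` lies in `S^{≥ m+1}`; conversely, it forces
every map from `S^{≤ m-1}` to the cone to vanish, so the cone lies in `S^{≥ m}`. The shift by
one in degree is absorbed by the quantifier over `n`.
-/

variable {T}

namespace TData

variable (t : TData T)

lemma hom_shift_neg_one_eq_zero {a b : ℤ} (hab : a < b + 1) {B Z : T} (hB : B ∈ t.le a)
    (hZ : Z ∈ t.ge b) (g : B ⟶ Z⟦(-1 : ℤ)⟧) : g = 0 := by
  let e : (Z⟦(-1 : ℤ)⟧)⟦(1 : ℤ)⟧ ≅ Z := (shiftFunctorCompIsoId T (-1 : ℤ) 1 (by simp)).app Z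
  have hg : g⟦(1 : ℤ)⟧' ≫ e.hom = 0 := t.hom_zero (by omega) (t.le_shift a hB) hZ _
  apply (shiftFunctor T (1 : ℤ)).map_injective
  simpa using hg =≫ e.inv

lemma shift_neg_one_hom_eq_zero {a b : ℤ} (hab : a + 1 < b) {X W : T} (hX : X ∈ t.le a)
    (hW : W ∈ t.ge b) (g : X⟦(-1 : ℤ)⟧ ⟶ W) : g = 0 := by
  let e : (X⟦(-1 : ℤ)⟧)⟦(1 : ℤ)⟧ ≅ X := (shiftFunctorCompIsoId T (-1 : ℤ) 1 (by simp)).app X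
  have hg : e.inv ≫ g⟦(1 : ℤ)⟧' = 0 := t.hom_zero (by omega) hX (t.ge_shift b hW) _
  apply (shiftFunctor T (1 : ℤ)).map_injective
  simpa using e.hom ≫= hg

lemma shift_truncLE_hom_truncGE_eq_zero (m : ℤ) (X : T)
    (s : ((t.truncLE m).obj X)⟦(1 : ℤ)⟧ ⟶ (t.truncGE (m + 1)).obj X) : s = 0 :=
  t.hom_zero (show m - 1 < m + 1 by omega) (t.le_shift m (t.truncLE_mem m X))
    (t.truncGE_mem (m + 1) X) s

lemma mem_ge_of_truncLEπ_eq_zero {m : ℤ} {X : T} (hπ : (t.truncLEπ m).app X = 0) :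
    X ∈ t.ge (m + 1) := by
  obtain ⟨h, hT⟩ := t.trunc_triangle m X
  obtain ⟨s, hs⟩ := Triangle.coyoneda_exact₁ _ hT (𝟙 _) (by
    show 𝟙 _ ≫ ((t.truncLEπ m).app X)⟦(1 : ℤ)⟧' = 0
    rw [hπ, Functor.map_zero, comp_zero])
  have hL : IsZero ((t.truncLE m).obj X) := by
    refine IsZero.of_full_of_faithful_of_isZero (shiftFunctor T (1 : ℤ)) _ ?_
    refine (IsZero.iff_id_eq_zero _).2 (hs.trans ?_)
    rw [t.shift_truncLE_hom_truncGE_eq_zero m X s]; exact zero_comp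
  have : IsIso ((t.truncGEι (m + 1)).app X) := (Triangle.isZero₁_iff_isIso₂ _ hT).1 hL
  exact t.ge_iso (m + 1) (asIso ((t.truncGEι (m + 1)).app X)).symm (t.truncGE_mem (m + 1) X)

lemma isIso_truncLEπ_of_truncGEι_eq_zero {m : ℤ} {X : T}
    (hι : (t.truncGEι (m + 1)).app X = 0) : IsIso ((t.truncLEπ m).app X) := by
  obtain ⟨h, hT⟩ := t.trunc_triangle m X
  obtain ⟨r, hr⟩ := Triangle.yoneda_exact₃ _ hT (𝟙 _) (by
    show (t.truncGEι (m + 1)).app X ≫ 𝟙 _ = 0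
    rw [hι, zero_comp])
  have hG : IsZero ((t.truncGE (m + 1)).obj X) := by
    refine (IsZero.iff_id_eq_zero _).2 (hr.trans ?_)
    rw [t.shift_truncLE_hom_truncGE_eq_zero m X r]; exact comp_zero
  exact (Triangle.isZero₃_iff_isIso₁ _ hT).1 hG

lemma shift_neg_one_mem_le {n : ℤ} {X : T} (hX : X ∈ t.le n) :
    X⟦(-1 : ℤ)⟧ ∈ t.le (n + 1) := by
  have hι : (t.truncGEι (n + 1 + 1)).app (X⟦(-1 : ℤ)⟧) = 0 :=
    t.shift_neg_one_hom_eq_zero (show n + 1 < n + 1 + 1 by omega) hX (t.truncGE_mem _ _) _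
  have := t.isIso_truncLEπ_of_truncGEι_eq_zero hι
  exact t.le_iso (n + 1) (asIso ((t.truncLEπ (n + 1)).app _)) (t.truncLE_mem _ _)

def BijectiveOnLE (m : ℤ) {X Y : T} (f : X ⟶ Y) : Prop :=
  ∀ ⦃B : T⦄, B ∈ t.le m → Function.Bijective (fun φ : B ⟶ X => φ ≫ f)

lemma bijectiveOnLE_mor₁ {m : ℤ} (Tr : Triangle T) (hTr : Tr ∈ distTriang T)
    (h₃ : Tr.obj₃ ∈ t.ge (m + 1)) : t.BijectiveOnLE m Tr.mor₁ := by
  intro B hB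
  constructor
  · intro φ₁ φ₂ hφ
    obtain ⟨g, hg⟩ := Triangle.coyoneda_exact₂ _ (inv_rot_of_distTriang _ hTr) (φ₁ - φ₂)
      (by
        show (φ₁ - φ₂) ≫ Tr.mor₁ = 0
        rwa [Preadditive.sub_comp, sub_eq_zero])
    have hg0 : g = 0 := t.hom_shift_neg_one_eq_zero (show m < m + 1 + 1 by omega) hB h₃ g
    exact sub_eq_zero.1 (hg.trans (by rw [hg0]; exact zero_comp))
  · intro ψ
    obtain ⟨φ, hφ⟩ := Triangle.coyoneda_exact₂ _ hTr ψ
      (t.hom_zero (show m < m + 1 by omega) hB h₃ _)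
    exact ⟨φ, hφ.symm⟩

lemma bijectiveOnLE_truncLEπ (m : ℤ) (X : T) : t.BijectiveOnLE m ((t.truncLEπ m).app X) := by
  obtain ⟨h, hT⟩ := t.trunc_triangle m X
  exact t.bijectiveOnLE_mor₁ _ hT (t.truncGE_mem (m + 1) X)

lemma isIso_iff_bijectiveOnLE {m : ℤ} {X Y : T} (hX : X ∈ t.le m) (hY : Y ∈ t.le m)
    (f : X ⟶ Y) : IsIso f ↔ t.BijectiveOnLE m f := by
  refine ⟨fun _ B _ => (isIso_iff_yoneda_map_bijective f).1 ‹_› B, fun hf => ?_⟩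
  obtain ⟨g, hg : g ≫ f = 𝟙 Y⟩ := (hf hY).2 (𝟙 Y)
  exact ⟨g, (hf hX).1 (by simp [hg]), hg⟩

lemma isIso_truncLE_map_iff {m : ℤ} {X Y : T} (f : X ⟶ Y) :
    IsIso ((t.truncLE m).map f) ↔ t.BijectiveOnLE m f := by
  rw [t.isIso_iff_bijectiveOnLE (t.truncLE_mem m X) (t.truncLE_mem m Y)]
  refine forall₂_congr fun B hB => ?_
  have hsq : (fun φ : B ⟶ _ => φ ≫ (t.truncLEπ m).app Y) ∘ (fun φ => φ ≫ (t.truncLE m).map f) =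
      (fun φ : B ⟶ X => φ ≫ f) ∘ (fun φ => φ ≫ (t.truncLEπ m).app X) := by
    ext φ
    simp
  rw [← Function.Bijective.of_comp_iff' (t.bijectiveOnLE_truncLEπ m Y hB), hsq,
    Function.Bijective.of_comp_iff _ (t.bijectiveOnLE_truncLEπ m X hB)]

lemma comp_mor₃_eq_zero_of_bijectiveOnLE {q : ℤ} (Tr : Triangle T) (hTr : Tr ∈ distTriang T)
    (hf : t.BijectiveOnLE q Tr.mor₁) {A : T} (hA : A⟦(-1 : ℤ)⟧ ∈ t.le q) (φ : A ⟶ Tr.obj₃) :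
    φ ≫ Tr.mor₃ = 0 := by
  let e : (A⟦(-1 : ℤ)⟧)⟦(1 : ℤ)⟧ ≅ A := (shiftFunctorCompIsoId T (-1 : ℤ) 1 (by simp)).app A
  -- `ψ` is the desuspension of `φ ≫ Tr.mor₃`, and it is killed by `Tr.mor₁`.
  obtain ⟨ψ, hψ⟩ := (shiftFunctor T (1 : ℤ)).map_surjective (e.hom ≫ φ ≫ Tr.mor₃)
  have hψf : ψ ≫ Tr.mor₁ = 0 := by
    apply (shiftFunctor T (1 : ℤ)).map_injective
    simp [hψ, comp_distTriang_mor_zero₃₁ _ hTr]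
  have hψ0 : ψ = 0 := (hf hA).1 (by simpa using hψf)
  simpa [hψ0] using (e.inv ≫= hψ).symm

lemma obj₃_mem_ge_of_bijectiveOnLE {q : ℤ} (Tr : Triangle T) (hTr : Tr ∈ distTriang T)
    (hf : t.BijectiveOnLE q Tr.mor₁) : Tr.obj₃ ∈ t.ge q := by
  have hA : (t.truncLE (q - 1)).obj Tr.obj₃ ∈ t.le q := t.le_mono (by omega) (t.truncLE_mem _ _)
  have hA' : ((t.truncLE (q - 1)).obj Tr.obj₃)⟦(-1 : ℤ)⟧ ∈ t.le q := by
    simpa only [sub_add_cancel] using t.shift_neg_one_mem_le (t.truncLE_mem (q - 1) Tr.obj₃)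
  obtain ⟨ξ, hξ⟩ := Triangle.coyoneda_exact₃ _ hTr _
    (t.comp_mor₃_eq_zero_of_bijectiveOnLE Tr hTr hf hA' ((t.truncLEπ (q - 1)).app _))
  obtain ⟨η, rfl⟩ := (hf hA).2 ξ
  have hπ : (t.truncLEπ (q - 1)).app Tr.obj₃ = 0 := by
    simp [hξ, comp_distTriang_mor_zero₁₂ _ hTr]
  simpa using t.mem_ge_of_truncLEπ_eq_zero hπ

lemma isIso_truncLE_map_of_coneIn {m : ℤ} {X Y : T} {f : X ⟶ Y}
    (hf : coneIn T (t.ge (m + 1)) f) : IsIso ((t.truncLE m).map f) := by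
  obtain ⟨Z, g, h, hT⟩ := distinguished_cocone_triangle f
  exact (t.isIso_truncLE_map_iff f).2 (t.bijectiveOnLE_mor₁ _ hT (hf Z g h hT))

lemma coneIn_of_isIso_truncLE_map {m : ℤ} {X Y : T} {f : X ⟶ Y}
    (hf : IsIso ((t.truncLE m).map f)) : coneIn T (t.ge m) f :=
  fun _ _ _ hT => t.obj₃_mem_ge_of_bijectiveOnLE _ hT ((t.isIso_truncLE_map_iff f).1 hf)

end TData

variable (T)

theorem statement16 (t : TData T) (E : ℕ ⥤ T) :
    (∀ n : ℕ, ∃ N : ℕ, ∀ i j : ℕ, N ≤ i → ∀ h : i ≤ j,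
        coneIn T (t.ge (n : ℤ)) (E.map (homOfLE h))) ↔
    (∀ n : ℤ, ∃ N : ℕ, ∀ i j : ℕ, N ≤ i → ∀ h : i ≤ j,
        IsIso ((t.truncLE n).map (E.map (homOfLE h)))) := by
  constructor
  · intro hCauchy n
    obtain ⟨N, hN⟩ := hCauchy (n + 1).toNat
    refine ⟨N, fun i j hi h => t.isIso_truncLE_map_of_coneIn fun Z g k hT => ?_⟩
    exact t.ge_anti (Int.self_le_toNat _) (hN i j hi h Z g k hT)
  · intro hStable n
    obtain ⟨N, hN⟩ := hStable n
    exact ⟨N, fun i j hi h => t.coneIn_of_isIso_truncLE_map (hN i j hi h)⟩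

end Paper
end

section
/- Let T be a triangulated category with countable coproducts and a nondegenerate t-structure such that countable coproducts of objects of T^{≥0} lie in T^{≥ -r} for some r > 0. Then every object of T^+ is the homotopy colimit of a Cauchy sequence in T^b (with respect to the metric M_i = T^b ∩ T^{≥ i}), and every object of T is the homotopy colimit of a Cauchy sequence in T^- (with respect to the metric M_i = T^- ∩ T^{≥ i}). -/
/-
`Y` is the homotopy colimit of its truncation sequence `τ^{≤0} Y → τ^{≤1} Y → ⋯`, whose
transition maps `τ^{≤i} Y → τ^{≤j} Y` have cones in `T^{≥i+1} ∩ T^{≤j}`. Let `φ` be the map from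
the homotopy colimit to `Y` induced by the truncation maps. Its cone receives no nonzero map from a
bounded-above object, hence lies in every `T^{≥n}` and vanishes by nondegeneracy. For `V ∈ T^{≤m}`
this comes down to two facts about `1 - shift` on `⊕ τ^{≤i} Y`: it is injective on `Hom(V, -)`,
and its image there is the kernel of composition with `⊕ τ^{≤i} Y → Y`. Both hold for the constant
sequence `⊕ Y`, where partial sums invert `1 - shift`. They transfer to the truncation sequence
through its tail `⊕ τ^{≤K+i} Y` for `K ≥ m + r`: `shift^K` factors through the tail, and the tail
maps bijectively to `⊕ Y` on `Hom(V, -)` because the cone `⊕ τ^{≥K+i+1} Y` of `⊕ τ^{≤K+i} Y → ⊕ Y`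
lies in `T^{≥K+1-r}` by the coproduct hypothesis.
-/

open CategoryTheory CategoryTheory.Limits CategoryTheory.Pretriangulated ZeroObject

universe v u v₂ u₂

namespace Paper

variable (T : Type u) [Category.{v} T] [HasZeroObject T] [HasShift T ℤ]
  [Preadditive T] [∀ n : ℤ, (shiftFunctor T n).Additive] [Pretriangulated T]

variable [HasColimitsOfShape (Discrete ℕ) T]

/-- The "shift by one" endomorphism of `⊕ᵢ Aᵢ` for a sequence `A`, whose components are
`Aᵢ ⟶ A_{i+1} ⟶ ⊕ᵢ Aᵢ`. -/
noncomputable def seqShift (A : ℕ ⥤ T) : (∐ fun i => A.obj i) ⟶ ∐ fun i => A.obj i :=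
  Sigma.desc fun i => A.map (homOfLE (Nat.le_succ i)) ≫ Sigma.ι (fun i => A.obj i) (i + 1)

/-- `π : ⊕ᵢ Aᵢ ⟶ X` exhibits `X` as the homotopy colimit of the sequence `A`: the map
`1 − shift` followed by `π` extends to a distinguished triangle. -/
def IsHocolim (A : ℕ ⥤ T) (X : T) (π : (∐ fun i => A.obj i) ⟶ X) : Prop :=
  ∃ w, Triangle.mk (𝟙 (∐ fun i => A.obj i) - seqShift T A) π w ∈ distTriang T

lemma opCoproductIsoProduct_hom_comp_piMap {C : Type*} [Category C] {J : Type*}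
    [HasCoproductsOfShape J C] {X Y : J → C} (f : ∀ j, X j ⟶ Y j) :
    (opCoproductIsoProduct Y).hom ≫ Limits.Pi.map (fun j => (f j).op) =
      (Limits.Sigma.map f).op ≫ (opCoproductIsoProduct X).hom :=
  Pi.hom_ext _ _ fun j => by simp [← op_comp]

lemma eq_zero_of_comp_shift_map_eq_zero {C : Type*} [Category C] [Preadditive C] [HasShift C ℤ]
    [∀ n : ℤ, (shiftFunctor C n).Additive] {X Y W : C} (f : X ⟶ Y)
    (hf : ∀ x : W⟦(-1 : ℤ)⟧ ⟶ X, x ≫ f = 0 → x = 0)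
    (y : W ⟶ X⟦(1 : ℤ)⟧) (hy : y ≫ f⟦(1 : ℤ)⟧' = 0) : y = 0 := by
  let adj : shiftFunctor C (-1 : ℤ) ⊣ shiftFunctor C (1 : ℤ) :=
    (shiftEquiv' C (-1 : ℤ) 1 (by norm_num)).toAdjunction
  obtain ⟨x, rfl⟩ := (adj.homEquiv W X).surjective y
  have hx : x ≫ f = 0 := (adj.homEquiv W Y).injective <| by
    rw [adj.homEquiv_naturality_right, adj.homAddEquiv_zero]
    exact hy
  rw [hf x hx, adj.homAddEquiv_zero]

section Sequences

variable {C : Type*} [Category C] [HasColimitsOfShape (Discrete ℕ) C]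

abbrev seqTail (K : ℕ) (A : ℕ ⥤ C) : ℕ ⥤ C where
  obj i := A.obj (K + i)
  map f := A.map (homOfLE (Nat.add_le_add_left (leOfHom f) K))
  map_id _ := A.map_id _
  map_comp _ _ := A.map_comp _ _

noncomputable def seqShiftPow (A : ℕ ⥤ C) : ℕ → ((∐ fun i => A.obj i) ⟶ ∐ fun i => A.obj i)
  | 0 => 𝟙 _
  | k + 1 => seqShiftPow A k ≫ seqShift C A

def IsSeqCocone (A : ℕ ⥤ C) {Y : C} (π : ∀ i, A.obj i ⟶ Y) : Prop :=
  ∀ i j (h : i ≤ j), A.map (homOfLE h) ≫ π j = π i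

noncomputable def seqSigmaπ (A : ℕ ⥤ C) {Y : C} (π : ∀ i, A.obj i ⟶ Y) :
    (∐ fun i => A.obj i) ⟶ ∐ fun _ : ℕ => Y :=
  Limits.Sigma.map π

noncomputable def constSeqShift (Y : C) : (∐ fun _ : ℕ => Y) ⟶ ∐ fun _ : ℕ => Y :=
  Sigma.desc fun i => Sigma.ι (fun _ : ℕ => Y) (i + 1)

noncomputable def seqTailι (K : ℕ) (A : ℕ ⥤ C) :
    (∐ fun i => (seqTail K A).obj i) ⟶ ∐ fun i => A.obj i :=
  Sigma.desc fun i => Sigma.ι (fun i => A.obj i) (K + i)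

noncomputable def seqToTail (K : ℕ) (A : ℕ ⥤ C) :
    (∐ fun i => A.obj i) ⟶ ∐ fun i => (seqTail K A).obj i :=
  Limits.Sigma.map fun i => A.map (homOfLE (Nat.le_add_left i K))

lemma ι_seqShift (A : ℕ ⥤ C) (i : ℕ) :
    Sigma.ι (fun i => A.obj i) i ≫ seqShift C A =
      A.map (homOfLE (Nat.le_succ i)) ≫ Sigma.ι (fun i => A.obj i) (i + 1) :=
  Sigma.ι_desc _ _

lemma ι_seqShiftPow (A : ℕ ⥤ C) (k i j : ℕ) (h : i + k = j) :
    Sigma.ι (fun i => A.obj i) i ≫ seqShiftPow A k =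
      A.map (homOfLE (by omega)) ≫ Sigma.ι (fun i => A.obj i) j := by
  subst h
  induction k with
  | zero => simp [seqShiftPow]
  | succ k ih =>
    rw [seqShiftPow, ← Category.assoc, ih, Category.assoc, ι_seqShift, ← Category.assoc,
      ← A.map_comp]
    rfl

lemma comp_seqShiftPow_of_comp_seqShift {A : ℕ ⥤ C} {V : C} {v : V ⟶ ∐ fun i => A.obj i}
    (hv : v ≫ seqShift C A = v) (k : ℕ) : v ≫ seqShiftPow A k = v := by
  induction k with
  | zero => exact Category.comp_id v
  | succ k ih => rw [seqShiftPow, ← Category.assoc, ih, hv]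

lemma seqTailι_comp_seqShift (K : ℕ) (A : ℕ ⥤ C) :
    seqTailι K A ≫ seqShift C A = seqShift C (seqTail K A) ≫ seqTailι K A := by
  refine Sigma.hom_ext _ _ fun i => ?_
  rw [seqTailι, Sigma.ι_desc_assoc, ι_seqShift, ← Category.assoc, ι_seqShift, Category.assoc,
    Sigma.ι_desc]
  rfl

lemma seqToTail_comp_seqTailι (K : ℕ) (A : ℕ ⥤ C) :
    seqToTail K A ≫ seqTailι K A = seqShiftPow A K := by
  refine Sigma.hom_ext _ _ fun i => ?_
  rw [ι_seqShiftPow A K i (K + i) (by omega), seqToTail, seqTailι, Sigma.ι_map_assoc,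
    Sigma.ι_desc]

lemma seqShift_comp_seqSigmaπ {A : ℕ ⥤ C} {Y : C} {π : ∀ i, A.obj i ⟶ Y}
    (hπ : IsSeqCocone A π) :
    seqShift C A ≫ seqSigmaπ A π = seqSigmaπ A π ≫ constSeqShift Y := by
  refine Sigma.hom_ext _ _ fun i => ?_
  rw [← Category.assoc, ι_seqShift, seqSigmaπ, Category.assoc, Sigma.ι_map, ← Category.assoc, hπ,
    Sigma.ι_map_assoc, constSeqShift, Sigma.ι_desc]

lemma seqShift_comp_desc {A : ℕ ⥤ C} {Y : C} {π : ∀ i, A.obj i ⟶ Y}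
    (hπ : IsSeqCocone A π) :
    seqShift C A ≫ Sigma.desc π = Sigma.desc π := by
  refine Sigma.hom_ext _ _ fun i => ?_
  rw [← Category.assoc, ι_seqShift, Category.assoc, Sigma.ι_desc, Sigma.ι_desc, hπ]

lemma seqSigmaπ_comp_desc_id (A : ℕ ⥤ C) {Y : C} (π : ∀ i, A.obj i ⟶ Y) :
    seqSigmaπ A π ≫ Sigma.desc (fun _ => 𝟙 Y) = Sigma.desc π := by
  refine Sigma.hom_ext _ _ fun i => ?_
  rw [seqSigmaπ, Sigma.ι_map_assoc, Sigma.ι_desc, Sigma.ι_desc, Category.comp_id]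

lemma seqToTail_comp_seqSigmaπ (K : ℕ) {A : ℕ ⥤ C} {Y : C} {π : ∀ i, A.obj i ⟶ Y}
    (hπ : IsSeqCocone A π) :
    seqToTail K A ≫ seqSigmaπ (seqTail K A) (fun i => π (K + i)) = seqSigmaπ A π := by
  rw [seqToTail, seqSigmaπ, seqSigmaπ, Sigma.map_comp_map]
  exact congrArg Limits.Sigma.map (funext fun i => hπ _ _ _)

section Preadditive

variable [Preadditive C]

lemma sum_seqShiftPow_comp_one_sub_seqShift (A : ℕ ⥤ C) (K : ℕ) :
    (∑ u ∈ Finset.range K, seqShiftPow A u) ≫ (𝟙 _ - seqShift C A) = 𝟙 _ - seqShiftPow A K := by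
  induction K with
  | zero => simp [seqShiftPow]
  | succ K ih =>
    rw [Finset.sum_range_succ, Preadditive.add_comp, ih, Preadditive.comp_sub, Category.comp_id,
      seqShiftPow]
    abel

noncomputable def constSeqPartialSums (Y : C) : (∐ fun _ : ℕ => Y) ⟶ ∐ fun _ : ℕ => Y :=
  Sigma.desc fun i => ∑ k ∈ Finset.range (i + 1), Sigma.ι (fun _ : ℕ => Y) k

lemma constSeqShift_comp_constSeqPartialSums (Y : C) :
    constSeqShift Y ≫ constSeqPartialSums Y = constSeqPartialSums Y + constSeqShift Y := by
  refine Sigma.hom_ext _ _ fun i => ?_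
  simp [constSeqShift, constSeqPartialSums, Finset.sum_range_succ _ (i + 1)]

lemma constSeqPartialSums_comp_one_sub_constSeqShift (Y : C) :
    constSeqPartialSums Y ≫ (𝟙 _ - constSeqShift Y) =
      Sigma.desc (fun _ => 𝟙 Y) ≫ Sigma.ι (fun _ : ℕ => Y) 0 - constSeqShift Y := by
  have hs : ∀ k, Sigma.ι (fun _ : ℕ => Y) k ≫ constSeqShift Y = Sigma.ι (fun _ : ℕ => Y) (k + 1) :=
    fun k => by simp [constSeqShift]
  refine Sigma.hom_ext _ _ fun i => ?_
  simp only [constSeqPartialSums, Sigma.ι_desc_assoc, Preadditive.sum_comp, Preadditive.comp_sub,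
    Category.comp_id, hs, Sigma.ι_desc, Category.id_comp, ← Finset.sum_sub_distrib,
    Finset.sum_range_sub']

lemma eq_zero_of_comp_constSeqShift_eq {Y V : C} (u : V ⟶ ∐ fun _ : ℕ => Y)
    (hu : u ≫ constSeqShift Y = u) : u = 0 := by
  have h := congrArg (· ≫ constSeqPartialSums Y) hu
  simp only [Category.assoc, constSeqShift_comp_constSeqPartialSums, Preadditive.comp_add,
    add_eq_left] at h
  rw [← hu, h]

lemma exists_comp_one_sub_constSeqShift {Y V : C} (u : V ⟶ ∐ fun _ : ℕ => Y)
    (hu : u ≫ Sigma.desc (fun _ => 𝟙 Y) = 0) : ∃ z, z ≫ (𝟙 _ - constSeqShift Y) = u := by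
  refine ⟨u - u ≫ constSeqPartialSums Y, ?_⟩
  rw [Preadditive.sub_comp, Category.assoc, constSeqPartialSums_comp_one_sub_constSeqShift,
    Preadditive.comp_sub, Preadditive.comp_sub, ← Category.assoc, hu,
    zero_comp, Category.comp_id]
  abel

lemma one_sub_seqShift_comp_seqSigmaπ {A : ℕ ⥤ C} {Y : C} {π : ∀ i, A.obj i ⟶ Y}
    (hπ : IsSeqCocone A π) :
    (𝟙 _ - seqShift C A) ≫ seqSigmaπ A π = seqSigmaπ A π ≫ (𝟙 _ - constSeqShift Y) := by
  rw [Preadditive.sub_comp, Preadditive.comp_sub, seqShift_comp_seqSigmaπ hπ, Category.id_comp,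
    Category.comp_id]

lemma seqTailι_comp_one_sub_seqShift (K : ℕ) (A : ℕ ⥤ C) :
    seqTailι K A ≫ (𝟙 _ - seqShift C A) = (𝟙 _ - seqShift C (seqTail K A)) ≫ seqTailι K A := by
  rw [Preadditive.sub_comp, Preadditive.comp_sub, seqTailι_comp_seqShift, Category.id_comp,
    Category.comp_id]

lemma eq_zero_of_comp_one_sub_seqShift_eq_zero {A : ℕ ⥤ C} {Y : C} {π : ∀ i, A.obj i ⟶ Y}
    (hπ : IsSeqCocone A π) (K : ℕ) {V : C}
    (hinj : ∀ x : V ⟶ ∐ fun i => (seqTail K A).obj i,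
      x ≫ seqSigmaπ (seqTail K A) (fun i => π (K + i)) = 0 → x = 0)
    (v : V ⟶ ∐ fun i => A.obj i) (hv : v ≫ (𝟙 _ - seqShift C A) = 0) : v = 0 := by
  have hv' : v ≫ seqShift C A = v := by
    rw [Preadditive.comp_sub, Category.comp_id, sub_eq_zero] at hv
    exact hv.symm
  have hvπ : v ≫ seqSigmaπ A π = 0 := eq_zero_of_comp_constSeqShift_eq _ <| by
    rw [Category.assoc, ← seqShift_comp_seqSigmaπ hπ, ← Category.assoc, hv']
  have hσ : v ≫ seqToTail K A = 0 := hinj _ <| by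
    rw [Category.assoc, seqToTail_comp_seqSigmaπ K hπ, hvπ]
  rw [← comp_seqShiftPow_of_comp_seqShift hv' K, ← seqToTail_comp_seqTailι, ← Category.assoc, hσ,
    zero_comp]

lemma exists_comp_one_sub_seqShift_eq {A : ℕ ⥤ C} {Y : C} {π : ∀ i, A.obj i ⟶ Y}
    (hπ : IsSeqCocone A π) (K : ℕ) {V : C}
    (hsurj : ∀ y : V ⟶ ∐ fun _ : ℕ => Y,
      ∃ x, x ≫ seqSigmaπ (seqTail K A) (fun i => π (K + i)) = y)
    (hinj : ∀ x : V ⟶ ∐ fun i => (seqTail K A).obj i,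
      x ≫ seqSigmaπ (seqTail K A) (fun i => π (K + i)) = 0 → x = 0)
    (w : V ⟶ ∐ fun i => A.obj i) (hw : w ≫ Sigma.desc π = 0) :
    ∃ x, x ≫ (𝟙 _ - seqShift C A) = w := by
  obtain ⟨z, hz⟩ := exists_comp_one_sub_constSeqShift (w ≫ seqSigmaπ A π) <| by
    rw [Category.assoc, seqSigmaπ_comp_desc_id, hw]
  obtain ⟨y, rfl⟩ := hsurj z
  have hy : y ≫ (𝟙 _ - seqShift C (seqTail K A)) = w ≫ seqToTail K A := by
    refine sub_eq_zero.1 (hinj _ ?_)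
    rw [Preadditive.sub_comp, Category.assoc,
      one_sub_seqShift_comp_seqSigmaπ (A := seqTail K A) (π := fun i => π (K + i))
        fun i j h => hπ _ _ _,
      ← Category.assoc, hz, Category.assoc, seqToTail_comp_seqSigmaπ K hπ, sub_self]
  refine ⟨w ≫ ∑ u ∈ Finset.range K, seqShiftPow A u + y ≫ seqTailι K A, ?_⟩
  rw [Preadditive.add_comp, Category.assoc, sum_seqShiftPow_comp_one_sub_seqShift, Category.assoc,
    seqTailι_comp_one_sub_seqShift, ← Category.assoc, hy, Category.assoc, seqToTail_comp_seqTailι,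
    Preadditive.comp_sub, Category.comp_id, sub_add_cancel]

end Preadditive

end Sequences

section Pretriangulated

variable {C : Type*} [Category C] [HasZeroObject C] [HasShift C ℤ] [Preadditive C]
  [∀ n : ℤ, (shiftFunctor C n).Additive] [Pretriangulated C]

-- Dual to `productTriangle_distinguished`, through the pretriangulated structure of `Cᵒᵖ`.
open CategoryTheory.Pretriangulated.Opposite in
lemma exists_distTriang_sigmaMap {J : Type*} [HasCoproductsOfShape J C] (Tr : J → Triangle C)
    (hT : ∀ j, Tr j ∈ distTriang C) :
    ∃ (Z : C) (g : (∐ fun j => (Tr j).obj₂) ⟶ Z) (h : Z ⟶ (∐ fun j => (Tr j).obj₁)⟦(1 : ℤ)⟧),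
      Triangle.mk (Limits.Sigma.map fun j => (Tr j).mor₁) g h ∈ distTriang C ∧
      Nonempty (Z ≅ ∐ fun j => (Tr j).obj₃) := by
  let Q := ((triangleOpEquivalence C).inverse.obj (productTriangle fun j =>
    (triangleOpEquivalence C).functor.obj (Opposite.op (Tr j)))).unop
  have hQ : Q ∈ distTriang C :=
    unop_distinguished _ (productTriangle_distinguished _ fun j => op_distinguished _ (hT j))
  obtain ⟨Z, g, h, hT'⟩ := distinguished_cocone_triangle (Limits.Sigma.map fun j => (Tr j).mor₁)
  let e := isoTriangleOfIso₁₂ Q _ hQ hT'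
    (opCoproductIsoProduct _).unop (opCoproductIsoProduct _).unop
    (Quiver.Hom.op_inj (opCoproductIsoProduct_hom_comp_piMap _))
  exact ⟨Z, g, h, hT', ⟨(Triangle.π₃.mapIso e).symm ≪≫ (opCoproductIsoProduct _).unop⟩⟩

lemma hom_to_obj₃_eq_zero {Tr : Triangle C} (hT : Tr ∈ distTriang C) {W : C}
    (hsurj : ∀ y : W ⟶ Tr.obj₂, ∃ x, x ≫ Tr.mor₁ = y)
    (hinj : ∀ x : W⟦(-1 : ℤ)⟧ ⟶ Tr.obj₁, x ≫ Tr.mor₁ = 0 → x = 0)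
    (f : W ⟶ Tr.obj₃) : f = 0 := by
  have hf : f ≫ Tr.mor₃ = 0 := eq_zero_of_comp_shift_map_eq_zero _ hinj _ <| by
    rw [Category.assoc, comp_distTriang_mor_zero₃₁ _ hT, comp_zero]
  obtain ⟨y, rfl⟩ := Tr.coyoneda_exact₃ hT f hf
  obtain ⟨x, rfl⟩ := hsurj y
  rw [Category.assoc, comp_distTriang_mor_zero₁₂ _ hT, comp_zero]

namespace TData

variable (t : TData C)

lemma hom_to_shift_neg_one_eq_zero {n m : ℤ} (hnm : n ≤ m) {X W : C} (hX : X ∈ t.le n)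
    (hW : W ∈ t.ge m) (f : X ⟶ W⟦(-1 : ℤ)⟧) : f = 0 := by
  let adj : shiftFunctor C (1 : ℤ) ⊣ shiftFunctor C (-1 : ℤ) :=
    (shiftEquiv' C (1 : ℤ) (-1) (by norm_num)).toAdjunction
  obtain ⟨g, rfl⟩ := (adj.homEquiv X W).surjective f
  rw [t.hom_zero (by omega) (t.le_shift n hX) hW g, adj.homAddEquiv_zero]

lemma hom_from_shift_neg_one_eq_zero {n m : ℤ} (hnm : n + 2 ≤ m) {X W : C} (hX : X ∈ t.le n)
    (hW : W ∈ t.ge m) (f : X⟦(-1 : ℤ)⟧ ⟶ W) : f = 0 := by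
  let adj : shiftFunctor C (-1 : ℤ) ⊣ shiftFunctor C (1 : ℤ) :=
    (shiftEquiv' C (-1 : ℤ) 1 (by norm_num)).toAdjunction
  obtain ⟨g, rfl⟩ := (adj.homEquiv X W).symm.surjective f
  rw [t.hom_zero (by omega) hX (t.ge_shift m hW) g]
  exact (adj.homAddEquiv X W).symm.map_zero

lemma exists_comp_mor₁_eq {Tr : Triangle C} (hT : Tr ∈ distTriang C) {m n : ℤ} (hmn : m < n)
    {V : C} (hV : V ∈ t.le m) (h₃ : Tr.obj₃ ∈ t.ge n) (y : V ⟶ Tr.obj₂) :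
    ∃ x, x ≫ Tr.mor₁ = y := by
  obtain ⟨x, hx⟩ := Tr.coyoneda_exact₂ hT y (t.hom_zero hmn hV h₃ _)
  exact ⟨x, hx.symm⟩

lemma eq_zero_of_comp_mor₁_eq_zero {Tr : Triangle C} (hT : Tr ∈ distTriang C) {m n : ℤ}
    (hmn : m ≤ n) {V : C} (hV : V ∈ t.le m) (h₃ : Tr.obj₃ ∈ t.ge n) (x : V ⟶ Tr.obj₁)
    (hx : x ≫ Tr.mor₁ = 0) : x = 0 := by
  obtain ⟨z, rfl⟩ := Tr.invRotate.coyoneda_exact₂ (inv_rot_of_distTriang _ hT) x hx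
  have hz : z = 0 := t.hom_to_shift_neg_one_eq_zero hmn hV h₃ z
  rw [hz]
  exact zero_comp

lemma eq_zero_of_mor₂_comp_eq_zero {Tr : Triangle C} (hT : Tr ∈ distTriang C) {m n : ℤ}
    (hnm : n ≤ m) {W : C} (h₁ : Tr.obj₁ ∈ t.le n) (hW : W ∈ t.ge m) (f : Tr.obj₃ ⟶ W)
    (hf : Tr.mor₂ ≫ f = 0) : f = 0 := by
  obtain ⟨g, rfl⟩ := Tr.yoneda_exact₃ hT f hf
  rw [t.hom_zero (show n - 1 < m by omega) (t.le_shift n h₁) hW g, comp_zero]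

lemma exists_comp_truncLEπ_eq {m n : ℤ} (hmn : m ≤ n) {V : C} (hV : V ∈ t.le m) {X : C}
    (y : V ⟶ X) : ∃ x, x ≫ (t.truncLEπ n).app X = y :=
  have ⟨_, hT⟩ := t.trunc_triangle n X
  t.exists_comp_mor₁_eq hT (by omega) hV (t.truncGE_mem _ _) y

lemma eq_zero_of_comp_truncLEπ_eq_zero {m n : ℤ} (hmn : m ≤ n + 1) {V : C} (hV : V ∈ t.le m)
    {X : C} (x : V ⟶ (t.truncLE n).obj X) (hx : x ≫ (t.truncLEπ n).app X = 0) : x = 0 :=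
  have ⟨_, hT⟩ := t.trunc_triangle n X
  t.eq_zero_of_comp_mor₁_eq_zero hT hmn hV (t.truncGE_mem _ _) x hx

lemma mem_ge_of_forall_hom_eq_zero {Z : C} (m : ℤ)
    (H : ∀ ⦃W : C⦄, W ∈ t.le (m - 1) → ∀ f : W ⟶ Z, f = 0) : Z ∈ t.ge m := by
  obtain ⟨δ, hT⟩ := t.trunc_triangle (m - 1) Z
  have h₁ : IsZero ((t.truncLE (m - 1)).obj Z) := by
    rw [IsZero.iff_id_eq_zero]
    exact t.eq_zero_of_comp_truncLEπ_eq_zero (by omega) (t.truncLE_mem _ _) _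
      ((Category.id_comp _).trans (H (t.truncLE_mem _ _) _))
  have : IsIso ((t.truncGEι (m - 1 + 1)).app Z) := (Triangle.isZero₁_iff_isIso₂ _ hT).1 h₁
  simpa using t.ge_iso _ (asIso ((t.truncGEι (m - 1 + 1)).app Z)).symm (t.truncGE_mem _ _)

lemma mem_le_of_forall_hom_eq_zero {Z : C} (m : ℤ)
    (H : ∀ ⦃W : C⦄, W ∈ t.ge (m + 1) → ∀ f : Z ⟶ W, f = 0) : Z ∈ t.le m := by
  obtain ⟨δ, hT⟩ := t.trunc_triangle m Z
  have h₃ : IsZero ((t.truncGE (m + 1)).obj Z) := by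
    rw [IsZero.iff_id_eq_zero]
    exact t.eq_zero_of_mor₂_comp_eq_zero hT (by omega) (t.truncLE_mem _ _) (t.truncGE_mem _ _) _
      ((Category.comp_id _).trans (H (t.truncGE_mem _ _) _))
  have : IsIso ((t.truncLEπ m).app Z) := (Triangle.isZero₃_iff_isIso₁ _ hT).1 h₃
  exact t.le_iso _ (asIso ((t.truncLEπ m).app Z)) (t.truncLE_mem _ _)

lemma le_shift_neg_one {n : ℤ} {X : C} (hX : X ∈ t.le n) : X⟦(-1 : ℤ)⟧ ∈ t.le (n + 1) :=
  t.mem_le_of_forall_hom_eq_zero _ fun _ hW f =>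
    t.hom_from_shift_neg_one_eq_zero (by omega) hX hW f

lemma ge_shift_neg_one {n : ℤ} {X : C} (hX : X ∈ t.ge n) : X⟦(-1 : ℤ)⟧ ∈ t.ge (n + 1) :=
  t.mem_ge_of_forall_hom_eq_zero _ fun _ hW f =>
    t.hom_to_shift_neg_one_eq_zero (by omega) hW hX f

lemma mem_ge_shift {n : ℤ} {X : C} (hX : X ∈ t.ge n) (b : ℤ) : X⟦b⟧ ∈ t.ge (n - b) := by
  refine Int.induction_on b ?_ (fun b ih => ?_) (fun b ih => ?_)
  · exact t.ge_iso _ ((shiftFunctorZero C ℤ).app X).symm (by simpa using hX)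
  · have h := t.ge_shift _ ih
    rw [show n - b - 1 = n - (b + 1) by ring] at h
    exact t.ge_iso _ ((shiftFunctorAdd' C (b : ℤ) 1 (b + 1) rfl).app X).symm h
  · have h := t.ge_shift_neg_one ih
    rw [show n - -b + 1 = n - (-b - 1) by ring] at h
    exact t.ge_iso _ ((shiftFunctorAdd' C (-(b : ℤ)) (-1) (-b - 1) (by ring)).app X).symm h

lemma truncLE_obj_mem_ge {q n : ℤ} (hqn : q ≤ n + 2) {Y : C} (hY : Y ∈ t.ge q) :
    (t.truncLE n).obj Y ∈ t.ge q :=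
  t.mem_ge_of_forall_hom_eq_zero q fun _ hW f =>
    t.eq_zero_of_comp_truncLEπ_eq_zero (by omega) hW f (t.hom_zero (by omega) hW hY _)

lemma truncLEle_comp_truncLEπ {i j : ℤ} (hij : i ≤ j) (Y : C) :
    (t.truncLEle hij).app Y ≫ (t.truncLEπ j).app Y = (t.truncLEπ i).app Y :=
  NatTrans.congr_app (t.truncLEle_π hij) Y

lemma coneIn_truncLEle {i j : ℤ} (hij : i ≤ j) (Y : C) :
    coneIn C {Z | Z ∈ t.ge (i + 1) ∧ Z ∈ t.le j} ((t.truncLEle hij).app Y) := by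
  intro Z g h hT
  have hπ := t.truncLEle_comp_truncLEπ hij Y
  refine ⟨t.mem_ge_of_forall_hom_eq_zero _ fun W hW f => ?_,
    t.mem_le_of_forall_hom_eq_zero _ fun W hW f => t.eq_zero_of_mor₂_comp_eq_zero hT
      (show i ≤ j + 1 by omega) (t.truncLE_mem _ _) hW f
      (t.hom_zero (by omega) (t.truncLE_mem _ _) hW _)⟩
  replace hW : W ∈ t.le i := t.le_mono (by omega) hW
  refine hom_to_obj₃_eq_zero hT (fun y => ?_) (fun x hx => ?_) f
  · change W ⟶ (t.truncLE j).obj Y at y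
    change ∃ x : W ⟶ (t.truncLE i).obj Y, x ≫ (t.truncLEle hij).app Y = y
    obtain ⟨x, hx⟩ := t.exists_comp_truncLEπ_eq le_rfl hW (y ≫ (t.truncLEπ j).app Y)
    refine ⟨x, sub_eq_zero.1 (t.eq_zero_of_comp_truncLEπ_eq_zero (by omega) hW _ ?_)⟩
    rw [Preadditive.sub_comp, Category.assoc, hπ, sub_eq_zero]
    exact hx
  · change W⟦(-1 : ℤ)⟧ ⟶ (t.truncLE i).obj Y at x
    change x ≫ (t.truncLEle hij).app Y = 0 at hx
    refine t.eq_zero_of_comp_truncLEπ_eq_zero le_rfl (t.le_shift_neg_one hW) x ?_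
    rw [← hπ, ← Category.assoc]
    exact (congrArg (· ≫ (t.truncLEπ j).app Y) hx).trans zero_comp

abbrev truncSeq (Y : C) : ℕ ⥤ C where
  obj i := (t.truncLE i).obj Y
  map f := (t.truncLEle (Int.ofNat_le.2 (leOfHom f))).app Y
  map_id i := NatTrans.congr_app (t.truncLEle_refl i) Y
  map_comp _ _ := by rw [← NatTrans.comp_app, t.truncLEle_trans]

def truncSeqπ (Y : C) (i : ℕ) : (t.truncSeq Y).obj i ⟶ Y := (t.truncLEπ i).app Y

lemma isSeqCocone_truncSeqπ (Y : C) : IsSeqCocone (t.truncSeq Y) (t.truncSeqπ Y) :=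
  fun _ _ _ => t.truncLEle_comp_truncLEπ _ Y

section Coproducts

variable [HasColimitsOfShape (Discrete ℕ) C]

lemma sigma_mem_ge {r : ℤ}
    (hcoprod : ∀ X : ℕ → C, (∀ i, X i ∈ t.ge 0) → (∐ X) ∈ t.ge (-r))
    {X : ℕ → C} {b : ℤ} (hX : ∀ i, X i ∈ t.ge b) : ∐ X ∈ t.ge (b - r) := by
  have h : (∐ X)⟦b⟧ ∈ t.ge (-r) := t.ge_iso _ (PreservesCoproduct.iso (shiftFunctor C b) X).symm
    (hcoprod _ fun i => by simpa using t.mem_ge_shift (hX i) b)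
  have h' := t.mem_ge_shift h (-b)
  rw [show -r - -b = b - r by ring] at h'
  exact t.ge_iso _ ((shiftFunctorCompIsoId C b (-b) (by ring)).app _) h'

lemma exists_distTriang_truncSeq_tail {r : ℤ}
    (hcoprod : ∀ X : ℕ → C, (∀ i, X i ∈ t.ge 0) → (∐ X) ∈ t.ge (-r)) (Y : C) (K : ℕ) :
    ∃ (Z : C) (g : (∐ fun _ : ℕ => Y) ⟶ Z)
      (h : Z ⟶ (∐ fun i => (seqTail K (t.truncSeq Y)).obj i)⟦(1 : ℤ)⟧),
      Triangle.mk (seqSigmaπ (seqTail K (t.truncSeq Y)) fun i => t.truncSeqπ Y (K + i)) g h ∈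
        distTriang C ∧ Z ∈ t.ge (K + 1 - r) := by
  choose δ hδ using fun i : ℕ => t.trunc_triangle (K + i : ℕ) Y
  obtain ⟨Z, g, h, hT, ⟨e⟩⟩ := exists_distTriang_sigmaMap _ hδ
  exact ⟨Z, g, h, hT, t.ge_iso _ e.symm
    (t.sigma_mem_ge hcoprod fun i => t.ge_anti (by omega) (t.truncGE_mem _ _))⟩

lemma truncSeq_eq_zero_of_comp_one_sub_seqShift_eq_zero {r : ℤ}
    (hcoprod : ∀ X : ℕ → C, (∀ i, X i ∈ t.ge 0) → (∐ X) ∈ t.ge (-r)) (Y : C) {m : ℤ} {V : C}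
    (hV : V ∈ t.le m) (v : V ⟶ ∐ fun i => (t.truncSeq Y).obj i)
    (hv : v ≫ (𝟙 _ - seqShift C (t.truncSeq Y)) = 0) : v = 0 := by
  obtain ⟨Z, g, h, hT, hZ⟩ := t.exists_distTriang_truncSeq_tail hcoprod Y (m + r).toNat
  exact eq_zero_of_comp_one_sub_seqShift_eq_zero (t.isSeqCocone_truncSeqπ Y) _
    (fun x hx => t.eq_zero_of_comp_mor₁_eq_zero hT (by omega) hV hZ x hx) v hv

lemma truncSeq_exists_comp_one_sub_seqShift_eq {r : ℤ}
    (hcoprod : ∀ X : ℕ → C, (∀ i, X i ∈ t.ge 0) → (∐ X) ∈ t.ge (-r)) (Y : C) {m : ℤ} {V : C}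
    (hV : V ∈ t.le m) (w : V ⟶ ∐ fun i => (t.truncSeq Y).obj i)
    (hw : w ≫ Sigma.desc (t.truncSeqπ Y) = 0) :
    ∃ x, x ≫ (𝟙 _ - seqShift C (t.truncSeq Y)) = w := by
  obtain ⟨Z, g, h, hT, hZ⟩ := t.exists_distTriang_truncSeq_tail hcoprod Y (m + r).toNat
  exact exists_comp_one_sub_seqShift_eq (t.isSeqCocone_truncSeqπ Y) _
    (fun y => t.exists_comp_mor₁_eq hT (by omega) hV hZ y)
    (fun x hx => t.eq_zero_of_comp_mor₁_eq_zero hT (by omega) hV hZ x hx) w hw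

lemma exists_isHocolim_truncSeq (hnd : ∀ X : C, (∀ n : ℤ, X ∈ t.ge n) → IsZero X) {r : ℤ}
    (hcoprod : ∀ X : ℕ → C, (∀ i, X i ∈ t.ge 0) → (∐ X) ∈ t.ge (-r)) (Y : C) :
    ∃ (X : C) (π : (∐ fun i => (t.truncSeq Y).obj i) ⟶ X),
      IsHocolim C (t.truncSeq Y) X π ∧ Nonempty (X ≅ Y) := by
  obtain ⟨Z, g, h, hT⟩ := distinguished_cocone_triangle
    (𝟙 (∐ fun i => (t.truncSeq Y).obj i) - seqShift C (t.truncSeq Y))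
  have hg : (𝟙 _ - seqShift C (t.truncSeq Y)) ≫ g = 0 := comp_distTriang_mor_zero₁₂ _ hT
  have hh : h ≫ (𝟙 _ - seqShift C (t.truncSeq Y))⟦(1 : ℤ)⟧' = 0 :=
    comp_distTriang_mor_zero₃₁ _ hT
  have hdesc : (𝟙 _ - seqShift C (t.truncSeq Y)) ≫ Sigma.desc (t.truncSeqπ Y) = 0 := by
    rw [Preadditive.sub_comp, Category.id_comp,
      seqShift_comp_desc (t.isSeqCocone_truncSeqπ Y), sub_self]
  obtain ⟨φ, hφ⟩ : ∃ φ : Z ⟶ Y, Sigma.desc (t.truncSeqπ Y) = g ≫ φ :=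
    Triangle.yoneda_exact₂ _ hT _ hdesc
  have hsurj : ∀ {m : ℤ} {W : C}, W ∈ t.le m → ∀ y : W ⟶ Y, ∃ x : W ⟶ Z, x ≫ φ = y := by
    intro m W hW y
    obtain ⟨a, ha⟩ := t.exists_comp_truncLEπ_eq (Int.self_le_toNat m) hW y
    refine ⟨a ≫ Sigma.ι (fun i => (t.truncSeq Y).obj i) m.toNat ≫ g, ?_⟩
    rw [Category.assoc, Category.assoc, ← hφ, Sigma.ι_desc]
    exact ha
  have hinj : ∀ {m : ℤ} {V : C}, V ∈ t.le m → ∀ x : V ⟶ Z, x ≫ φ = 0 → x = 0 := by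
    intro m V hV x hx
    have hxh : x ≫ h = 0 := eq_zero_of_comp_shift_map_eq_zero _
      (t.truncSeq_eq_zero_of_comp_one_sub_seqShift_eq_zero hcoprod Y (t.le_shift_neg_one hV)) _
      (by rw [Category.assoc, hh, comp_zero])
    obtain ⟨w, rfl⟩ : ∃ w : V ⟶ ∐ fun i => (t.truncSeq Y).obj i, x = w ≫ g :=
      Triangle.coyoneda_exact₃ _ hT x hxh
    obtain ⟨y, rfl⟩ := t.truncSeq_exists_comp_one_sub_seqShift_eq hcoprod Y hV w
      (by rw [hφ, ← Category.assoc, hx])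
    rw [Category.assoc, hg, comp_zero]
  obtain ⟨D, u, δ, hD⟩ := distinguished_cocone_triangle φ
  have hD0 : IsZero D := hnd D fun n => t.mem_ge_of_forall_hom_eq_zero n fun W hW f =>
    hom_to_obj₃_eq_zero hD (hsurj hW) (hinj (t.le_shift_neg_one hW)) f
  have : IsIso φ := (Triangle.isZero₃_iff_isIso₁ _ hD).1 hD0
  exact ⟨Z, g, ⟨h, hT⟩, ⟨asIso φ⟩⟩

end Coproducts

end TData

end Pretriangulated

theorem statement18 (t : TData T)
    (hnd : ∀ X : T, (∀ n : ℤ, X ∈ t.ge n) → IsZero X)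
    (r : ℤ)
    (hcoprod : ∀ X : ℕ → T, (∀ i, X i ∈ t.ge 0) → (∐ X) ∈ t.ge (-r)) :
    (∀ Y : T, (∃ i : ℤ, Y ∈ t.ge i) →
      ∃ A : ℕ ⥤ T,
        (∀ j, (∃ p : ℤ, A.obj j ∈ t.le p) ∧ (∃ q : ℤ, A.obj j ∈ t.ge q)) ∧
        (∀ n : ℕ, ∃ N : ℕ, ∀ i j : ℕ, N ≤ i → ∀ h : i ≤ j,
          coneIn T
            {Z | Z ∈ t.ge (n : ℤ) ∧ (∃ p : ℤ, Z ∈ t.le p) ∧ ∃ q : ℤ, Z ∈ t.ge q}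
            (A.map (homOfLE h))) ∧
        ∃ (X : T) (π : (∐ fun i => A.obj i) ⟶ X),
          IsHocolim T A X π ∧ Nonempty (X ≅ Y)) ∧
    (∀ Y : T,
      ∃ A : ℕ ⥤ T,
        (∀ j, ∃ p : ℤ, A.obj j ∈ t.le p) ∧
        (∀ n : ℕ, ∃ N : ℕ, ∀ i j : ℕ, N ≤ i → ∀ h : i ≤ j,
          coneIn T {Z | Z ∈ t.ge (n : ℤ) ∧ ∃ p : ℤ, Z ∈ t.le p}
            (A.map (homOfLE h))) ∧
        ∃ (X : T) (π : (∐ fun i => A.obj i) ⟶ X),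
          IsHocolim T A X π ∧ Nonempty (X ≅ Y)) := by
  have cone (Y : T) {n i j : ℕ} (hni : n ≤ i) (hij : i ≤ j) {Z : T} {g h}
      (hT : Triangle.mk ((t.truncSeq Y).map (homOfLE hij)) g h ∈ distTriang T) :
      Z ∈ t.ge n ∧ Z ∈ t.le j ∧ Z ∈ t.ge (i + 1) :=
    have ⟨hge, hle⟩ := t.coneIn_truncLEle _ Y Z g h hT
    ⟨t.ge_anti (by omega) hge, hle, hge⟩
  refine ⟨fun Y ⟨q, hY⟩ => ⟨t.truncSeq Y, fun j => ⟨⟨j, t.truncLE_mem _ _⟩, ?_⟩,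
      fun n => ⟨n, fun i j hni hij Z g h hT => ?_⟩, t.exists_isHocolim_truncSeq hnd hcoprod Y⟩,
    fun Y => ⟨t.truncSeq Y, fun j => ⟨j, t.truncLE_mem _ _⟩,
      fun n => ⟨n, fun i j hni hij Z g h hT => ?_⟩, t.exists_isHocolim_truncSeq hnd hcoprod Y⟩⟩
  · exact ⟨min q (j + 2), t.truncLE_obj_mem_ge (by omega) (t.ge_anti (min_le_left _ _) hY)⟩
  · obtain ⟨hn, hj, hi⟩ := cone Y hni hij hT
    exact ⟨hn, ⟨j, hj⟩, ⟨i + 1, hi⟩⟩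
  · obtain ⟨hn, hj, -⟩ := cone Y hni hij hT
    exact ⟨hn, ⟨j, hj⟩⟩

end Paper
end
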